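/- arXiv:1107.5667 — 3 statements merged into one kernel-verified Lean document; each statement's English description precedes it below -/
import Mathlib

section
/- With the sequences (a_i), (c_i) as above (c_{i+1} = (c_i + a_i)²/(c_{i-1} + a_i) - a_i, 0 < c_1 < c_0, a_i > 0, a_i(c_{i-1} - 2c_i) < c_i²), the sequence (c_i) is strictly decreasing: c_{i+1} < c_i for all i ≥ 0. -/
/-!
Put `b i = c i + a i`. The recursion says `c (i+1) + a i = b i ^ 2 / (c (i-1) + a i)`, so
`c (i+1) < c i` is equivalent to `c i + a i < c (i-1) + a i`, i.e. to `c i < c (i-1)`; the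
monotonicity therefore propagates by induction. The hypothesis `a i * (c (i-1) - 2 c i) < c i ^ 2`
is exactly `(c i + a i) ^ 2 > a i * (c (i-1) + a i)`, i.e. `c (i+1) > 0`, which keeps the
denominators positive along the induction.
-/

lemma sq_div_sub_pos {x y a : ℝ} (hxa : 0 < x + a) (h : a * (x - 2 * y) < y ^ 2) :
    0 < (y + a) ^ 2 / (x + a) - a := by
  rw [sub_pos, lt_div_iff₀ hxa]
  nlinarith

lemma sq_div_sub_lt {x y a : ℝ} (hya : 0 < y + a) (hyx : y < x) :
    (y + a) ^ 2 / (x + a) - a < y := by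
  have hxa : 0 < x + a := by linarith
  rw [sub_lt_iff_lt_add, div_lt_iff₀ hxa, sq]
  exact mul_lt_mul_of_pos_left (by linarith) hya

theorem c_strict_anti_general (a c : ℕ → ℝ)
    (hc1 : 0 < c 1) (hc10 : c 1 < c 0)
    (ha_pos : ∀ i, 0 < a (i + 1))
    (ha_ineq : ∀ i, a (i + 1) * (c i - 2 * c (i + 1)) < (c (i + 1)) ^ 2)
    (hrec : ∀ i, c (i + 2) = (c (i + 1) + a (i + 1)) ^ 2 / (c i + a (i + 1)) - a (i + 1)) :
    ∀ i, c (i + 1) < c i := by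
  have key : ∀ i, 0 < c (i + 1) ∧ c (i + 1) < c i := by
    intro i
    induction i with
    | zero => exact ⟨hc1, hc10⟩
    | succ n ih =>
      obtain ⟨hpos, hlt⟩ := ih
      have ha := ha_pos n
      rw [hrec n]
      exact ⟨sq_div_sub_pos (by linarith) (ha_ineq n), sq_div_sub_lt (by linarith) hlt⟩
  exact fun i => (key i).2

/-- With `c 0 = c > 0`, `0 < c 1 < c 0`, and for every `i ≥ 1` a choice of `a i` with
`0 < a i < a (i-1)` (the constraint on `a 1` being only `0 < a 1`, since `a 0 = +∞`) and
`a i * (c (i-1) - 2 c i) < (c i)^2`, and the recursion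
`c (i+1) = (c i + a i)^2 / (c (i-1) + a i) - a i`, the sequence `c` is strictly decreasing. -/
theorem c_strict_anti (a c : ℕ → ℝ)
    (hc0 : 0 < c 0) (hc1 : 0 < c 1) (hc10 : c 1 < c 0)
    (ha_pos : ∀ i, 0 < a (i + 1))
    (ha_dec : ∀ i, a (i + 2) < a (i + 1))
    (ha_ineq : ∀ i, a (i + 1) * (c i - 2 * c (i + 1)) < (c (i + 1)) ^ 2)
    (hrec : ∀ i, c (i + 2) = (c (i + 1) + a (i + 1)) ^ 2 / (c i + a (i + 1)) - a (i + 1)) :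
    ∀ i, c (i + 1) < c i :=
  c_strict_anti_general a c hc1 hc10 ha_pos ha_ineq hrec
end

section
/- A particle entering vertically downward at abscissa x₀ with 1/2 < |x₀| < 1, reflecting specularly first off the parabola y = x²/2 + 1/2 and then off the parabola y = x² + 3/4 (both with focus (0,1)), exits moving vertically downward along a vertical line; moreover the exit abscissa is x₀/2. -/
/-!
Both parabolas have slope `x₀` at the relevant points (`x` at abscissa `x₀` on the first, `2x` at
abscissa `x₀/2` on the second), so the two reflections use the same unit normal, and a reflection in
a unit vector is an involution: the second bounce undoes the first. What remains is to see that the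
ray reflected at `(x₀, x₀²/2 + 1/2)`, which heads for the common focus, meets the second parabola at
abscissa `x₀/2`, after time `(1 + x₀²)/4`.
-/

/-- Specular reflection of a velocity `v` at a point with unit normal `n`. -/
def reflect (v n : ℝ × ℝ) : ℝ × ℝ := v - (2 * (v.1 * n.1 + v.2 * n.2)) • n

/-- The unit normal to the graph of a function with slope `s`. -/
noncomputable def unitNormal (s : ℝ) : ℝ × ℝ :=
  (-s / Real.sqrt (1 + s ^ 2), 1 / Real.sqrt (1 + s ^ 2))

theorem reflect_reflect {n : ℝ × ℝ} (hn : n.1 ^ 2 + n.2 ^ 2 = 1) (v : ℝ × ℝ) :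
    reflect (reflect v n) n = v := by
  ext <;> simp only [reflect, Prod.fst_sub, Prod.snd_sub, Prod.smul_fst, Prod.smul_snd,
    smul_eq_mul]
  · linear_combination 4 * (v.1 * n.1 + v.2 * n.2) * n.1 * hn
  · linear_combination 4 * (v.1 * n.1 + v.2 * n.2) * n.2 * hn

theorem unitNormal_fst_sq_add_snd_sq (s : ℝ) :
    (unitNormal s).1 ^ 2 + (unitNormal s).2 ^ 2 = 1 := by
  have hpos : 0 < 1 + s ^ 2 := by positivity
  simp only [unitNormal, div_pow, Real.sq_sqrt hpos.le]
  field_simp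
  ring

theorem reflect_down_unitNormal (s : ℝ) :
    reflect (0, -1) (unitNormal s) = (-(2 * s) / (1 + s ^ 2), (1 - s ^ 2) / (1 + s ^ 2)) := by
  have hpos : 0 < 1 + s ^ 2 := by positivity
  have hsq := Real.sq_sqrt hpos.le
  ext <;> simp only [reflect, unitNormal, Prod.fst_sub, Prod.snd_sub, Prod.smul_fst,
    Prod.smul_snd, smul_eq_mul] <;> field_simp
  · linear_combination 2 * s * hsq
  · linear_combination -2 * hsq

theorem two_reflections_exit_down_general (x₀ : ℝ) :
    let A : ℝ × ℝ := (x₀, x₀ ^ 2 / 2 + 1 / 2)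
    let v₁ : ℝ × ℝ := reflect (0, -1) (unitNormal x₀)
    ∃ t : ℝ, 0 < t ∧
      (A + t • v₁).2 = (A + t • v₁).1 ^ 2 + 3 / 4 ∧
      (A + t • v₁).1 = x₀ / 2 ∧
      reflect v₁ (unitNormal (2 * (A + t • v₁).1)) = ((0 : ℝ), (-1 : ℝ)) := by
  intro A v₁
  have hit : A + ((1 + x₀ ^ 2) / 4) • v₁ = (x₀ / 2, x₀ ^ 2 / 4 + 3 / 4) := by
    ext <;> simp only [A, v₁, reflect_down_unitNormal, Prod.fst_add, Prod.snd_add, Prod.smul_fst,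
      Prod.smul_snd, smul_eq_mul] <;> field_simp <;> ring
  refine ⟨(1 + x₀ ^ 2) / 4, by positivity, ?_, ?_, ?_⟩ <;> rw [hit]
  · ring
  · rw [mul_div_cancel₀ x₀ two_ne_zero]
    exact reflect_reflect (unitNormal_fst_sq_add_snd_sq x₀) (0, -1)

/-- A particle entering vertically downward at abscissa `x₀`, `1/2 < |x₀| < 1`, reflects
specularly off the parabola `y = x²/2 + 1/2` (slope `x` at abscissa `x`) and then off the
parabola `y = x² + 3/4` (slope `2x`), and exits moving vertically downward along the
vertical line of abscissa `x₀/2`. -/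
theorem two_reflections_exit_down (x₀ : ℝ) (h1 : 1 / 2 < |x₀|) (h2 : |x₀| < 1) :
    let A : ℝ × ℝ := (x₀, x₀ ^ 2 / 2 + 1 / 2)
    let v₁ : ℝ × ℝ := reflect (0, -1) (unitNormal x₀)
    ∃ t : ℝ, 0 < t ∧
      (A + t • v₁).2 = (A + t • v₁).1 ^ 2 + 3 / 4 ∧
      (A + t • v₁).1 = x₀ / 2 ∧
      reflect v₁ (unitNormal (2 * (A + t • v₁).1)) = ((0 : ℝ), (-1 : ℝ)) :=
  two_reflections_exit_down_general x₀
end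

section
/- For the sequences (a_i), (c_i) with c_{i+1} = (c_i + a_i)²/(c_{i-1} + a_i) - a_i and the constraints 0 < a_i < a_{i-1}, a_i(c_{i-1} - 2c_i) < c_i², 0 < c_1 < c_0: the ratio r_i = (c_i + a_i)/(c_{i-1} + a_i) satisfies 0 < r_i < 1 for all i ≥ 1. -/
/-- With `c 0 = c > 0`, `0 < c 1 < c 0`, and for every `i ≥ 1` a choice of `a i` with
`0 < a i < a (i-1)` (the constraint on `a 1` being only `0 < a 1`, since `a 0 = +∞`) and
`a i * (c (i-1) - 2 c i) < (c i)^2`, and the recursion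
`c (i+1) = (c i + a i)^2 / (c (i-1) + a i) - a i`, the homothety ratio `r i = (c i + a i)/(c (i-1) + a i)` lies in `(0,1)` for all `i ≥ 1`. -/
theorem ratio_lt_one (a c : ℕ → ℝ)
    (hc0 : 0 < c 0) (hc1 : 0 < c 1) (hc10 : c 1 < c 0)
    (ha_pos : ∀ i, 0 < a (i + 1))
    (ha_dec : ∀ i, a (i + 2) < a (i + 1))
    (ha_ineq : ∀ i, a (i + 1) * (c i - 2 * c (i + 1)) < (c (i + 1)) ^ 2)
    (hrec : ∀ i, c (i + 2) = (c (i + 1) + a (i + 1)) ^ 2 / (c i + a (i + 1)) - a (i + 1)) :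
    ∀ i, 0 < (c (i + 1) + a (i + 1)) / (c i + a (i + 1)) ∧
      (c (i + 1) + a (i + 1)) / (c i + a (i + 1)) < 1 := by
  have key : ∀ i, 0 < c i ∧ 0 < c (i + 1) ∧ c (i + 1) < c i := by
    intro i
    induction i with
    | zero => exact ⟨hc0, hc1, hc10⟩
    | succ n ih =>
      obtain ⟨h0, h1, h2⟩ := ih
      have hd : 0 < c n + a (n + 1) := add_pos h0 (ha_pos n)
      refine ⟨h1, ?_, ?_⟩
      · rw [hrec n, sub_pos, lt_div_iff₀ hd]
        nlinarith [ha_ineq n]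
      · rw [hrec n, sub_lt_iff_lt_add, div_lt_iff₀ hd]
        nlinarith [ha_pos n]
  intro i
  obtain ⟨h0, h1, h2⟩ := key i
  have hd : 0 < c i + a (i + 1) := add_pos h0 (ha_pos i)
  refine ⟨div_pos (add_pos h1 (ha_pos i)) hd, ?_⟩
  rw [div_lt_one hd]
  linarith
end
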